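/- arXiv:math/0605553 — 2 statements merged into one kernel-verified Lean document; each statement's English description precedes it below -/
import Mathlib

section
/- For every finitely generated group Γ and every positive integer n, there exists a finitely presented group Q and a surjective homomorphism π: Q → Γ such that every homomorphism Q → GL_n(ℂ) factors through π; that is, the map Hom(Γ, GL_n(ℂ)) → Hom(Q, GL_n(ℂ)) induced by precomposition with π is a bijection. -/
/-!
A representation `ρ : F_m → GL_n(R)` of the free group is the same as a point of `GL_n^m`, i.e.
a specialization `φ` of the coordinate ring `A` of `GL_n^m`, and `ρ w = 1` holds exactly when `φ`
kills the ideal `I w` generated by the entries of `g w - 1`, where `g` is the generic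
representation over `A`. For `R` Noetherian, so is `A`, and the ideal generated by all `I w` with
`w` in the kernel `K` of `F_m → Γ` is generated by finitely many of them. Those finitely many
relators `s` then suffice: every representation of `F_m / ⟪s⟫` kills `K`, hence factors
through `Γ`.
-/

open Matrix MvPolynomial

noncomputable section

section EntriesIdeal

variable {n A : Type*} [Fintype n] [DecidableEq n] [CommRing A]

def Matrix.entriesIdeal (M : Matrix n n A) : Ideal A :=
  Ideal.span (Set.range fun ij : n × n => M ij.1 ij.2)

theorem Matrix.entriesIdeal_le_ker_iff {B : Type*} [CommRing B] (M : Matrix n n A)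
    (φ : A →+* B) : M.entriesIdeal ≤ RingHom.ker φ ↔ φ.mapMatrix M = 0 := by
  simp only [Matrix.entriesIdeal, Ideal.span_le, Set.range_subset_iff, SetLike.mem_coe,
    RingHom.mem_ker, Prod.forall, ← Matrix.ext_iff]
  rfl

end EntriesIdeal

theorem Matrix.GeneralLinearGroup.map_eq_one_iff {n A B : Type*} [Fintype n] [DecidableEq n]
    [CommRing A] [CommRing B] (φ : A →+* B) (g : GL n A) :
    GeneralLinearGroup.map φ g = 1 ↔
      ((g : Matrix n n A) - 1).entriesIdeal ≤ RingHom.ker φ := by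
  rw [Matrix.entriesIdeal_le_ker_iff, map_sub, map_one, sub_eq_zero, Units.ext_iff]
  rfl

theorem exists_finset_forall_map_eq_one {F A n : Type*} [Group F] [Fintype n] [DecidableEq n]
    [CommRing A] [IsNoetherianRing A] (g : F →* GL n A) (K : Subgroup F) :
    ∃ s : Finset F, (s : Set F) ⊆ K ∧ ∀ (B : Type*) [CommRing B] (φ : A →+* B),
      (∀ w ∈ s, GeneralLinearGroup.map φ (g w) = 1) →
        ∀ w ∈ K, GeneralLinearGroup.map φ (g w) = 1 := by
  let I : K → Ideal A := fun w => ((g w : Matrix n n A) - 1).entriesIdeal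
  obtain ⟨t, ht⟩ := CompleteLattice.IsCompactElement.exists_finset_of_le_iSup (Ideal A)
    ((Submodule.fg_iff_compact _).mp (IsNoetherian.noetherian (⨆ w, I w))) I le_rfl
  refine ⟨t.map (Function.Embedding.subtype _), fun _ hx => ?_, fun B _ φ hφ w hw => ?_⟩
  · obtain ⟨w, -, rfl⟩ := Finset.mem_map.mp hx
    exact w.2
  simp only [GeneralLinearGroup.map_eq_one_iff] at hφ ⊢
  calc I ⟨w, hw⟩ ≤ ⨆ w, I w := le_iSup I _
    _ ≤ ⨆ w ∈ t, I w := ht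
    _ ≤ RingHom.ker φ := iSup₂_le fun w hwt => hφ w (Finset.mem_map_of_mem _ hwt)

namespace GLCoordRing

variable (ι n R : Type*) [Fintype n] [DecidableEq n] [CommRing R]

/-- `genericMatrix false i` and `genericMatrix true i` stand for the `i`-th matrix and its
inverse. -/
def genericMatrix (b : Bool) (i : ι) : Matrix n n (MvPolynomial (ι × n × n × Bool) R) :=
  Matrix.of fun j k => X (i, j, k, b)

def relations : Ideal (MvPolynomial (ι × n × n × Bool) R) :=
  ⨆ i, (genericMatrix ι n R false i * genericMatrix ι n R true i - 1).entriesIdeal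

end GLCoordRing

abbrev GLCoordRing (ι n R : Type*) [Fintype n] [DecidableEq n] [CommRing R] :=
  MvPolynomial (ι × n × n × Bool) R ⧸ GLCoordRing.relations ι n R

namespace GLCoordRing

variable {ι n R : Type*} [Fintype n] [DecidableEq n] [CommRing R]

theorem relations_le_ker_iff {B : Type*} [CommRing B]
    (φ : MvPolynomial (ι × n × n × Bool) R →+* B) :
    relations ι n R ≤ RingHom.ker φ ↔ ∀ i, φ.mapMatrix (genericMatrix ι n R false i) *
      φ.mapMatrix (genericMatrix ι n R true i) = 1 := by
  simp only [relations, iSup_le_iff, entriesIdeal_le_ker_iff, map_sub, map_mul, map_one,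
    sub_eq_zero]

variable (ι n R) in
def genericElement (i : ι) : GL n (GLCoordRing ι n R) :=
  have h := (relations_le_ker_iff (Ideal.Quotient.mk (relations ι n R))).mp Ideal.mk_ker.ge i
  ⟨_, _, h, mul_eq_one_comm.mp h⟩

variable (ι n R) in
def genericRep : FreeGroup ι →* GL n (GLCoordRing ι n R) :=
  FreeGroup.lift (genericElement ι n R)

def coords (p : ι → GL n R) : ι × n × n × Bool → R
  | (i, j, k, b) => (if b then (p i)⁻¹ else p i) j k

theorem eval_mapMatrix_genericMatrix (p : ι → GL n R) (i : ι) (b : Bool) :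
    (eval (coords p)).mapMatrix (genericMatrix ι n R b i) =
      ((if b then (p i)⁻¹ else p i : GL n R) : Matrix n n R) := by
  ext j k
  simp [genericMatrix, coords]

def evalAt (p : ι → GL n R) : GLCoordRing ι n R →+* R :=
  Ideal.Quotient.lift _ (eval (coords p)) fun _ ha => RingHom.mem_ker.mp <|
    (relations_le_ker_iff _).mpr (fun i => by
      rw [eval_mapMatrix_genericMatrix, eval_mapMatrix_genericMatrix]; simp) ha

theorem map_evalAt_comp_genericRep (p : ι → GL n R) :
    (GeneralLinearGroup.map (evalAt p)).comp (genericRep ι n R) = FreeGroup.lift p := by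
  ext i j k
  simp [genericRep, genericElement, evalAt, genericMatrix, GeneralLinearGroup.map_apply, coords]

end GLCoordRing

theorem FreeGroup.exists_finset_forall_GL_eq_one (ι n R : Type*) [Finite ι] [Fintype n]
    [DecidableEq n] [CommRing R] [IsNoetherianRing R] (K : Subgroup (FreeGroup ι)) :
    ∃ s : Finset (FreeGroup ι), (s : Set (FreeGroup ι)) ⊆ K ∧
      ∀ ρ : FreeGroup ι →* GL n R, (∀ w ∈ s, ρ w = 1) → ∀ w ∈ K, ρ w = 1 := by
  obtain ⟨s, hsK, hs⟩ := exists_finset_forall_map_eq_one (GLCoordRing.genericRep ι n R) K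
  refine ⟨s, hsK, fun ρ hρ => ?_⟩
  have hρ_eq : (GeneralLinearGroup.map (GLCoordRing.evalAt (ρ ∘ FreeGroup.of))).comp
      (GLCoordRing.genericRep ι n R) = ρ := by
    rw [GLCoordRing.map_evalAt_comp_genericRep]
    exact FreeGroup.lift.apply_symm_apply ρ
  rw [← hρ_eq] at hρ ⊢
  exact hs R _ hρ

theorem MonoidHom.bijective_comp_of_ker_le {Q Γ G : Type*} [Group Q] [Group Γ] [Group G]
    (π : Q →* Γ) (hπ : Function.Surjective π) (h : ∀ ψ : Q →* G, π.ker ≤ ψ.ker) :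
    Function.Bijective fun ρ : Γ →* G => ρ.comp π :=
  ⟨fun _ _ hρ => (MonoidHom.cancel_right hπ).mp hρ,
    fun ψ => ⟨π.liftOfSurjective hπ ⟨ψ, h ψ⟩, π.liftOfRightInverse_comp _ _ _⟩⟩

end

theorem stmt8_general (Γ : Type) [Group Γ] [Group.FG Γ] (n : ℕ) :
    ∃ (m : ℕ) (R : Finset (FreeGroup (Fin m)))
      (π : (FreeGroup (Fin m) ⧸
        Subgroup.normalClosure (R : Set (FreeGroup (Fin m)))) →* Γ),
      Function.Surjective π ∧
      Function.Bijective
        (fun ρ : Γ →* Matrix.GeneralLinearGroup (Fin n) ℂ => ρ.comp π) := by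
  obtain ⟨α, _, φ, hφ⟩ :=
    Group.fg_iff_exists_freeGroup_hom_surjective_finite.mp ‹Group.FG Γ›
  obtain ⟨m, ⟨e⟩⟩ := Finite.exists_equiv_fin α
  let f := φ.comp (FreeGroup.freeGroupCongr e).symm.toMonoidHom
  have hf : Function.Surjective f := hφ.comp (FreeGroup.freeGroupCongr e).symm.surjective
  obtain ⟨s, hsK, hs⟩ := FreeGroup.exists_finset_forall_GL_eq_one (Fin m) (Fin n) ℂ f.ker
  have hN := Subgroup.normalClosure_le_normal hsK
  have hπ := QuotientGroup.lift_surjective_of_surjective _ f hf hN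
  refine ⟨m, s, QuotientGroup.lift _ f hN, hπ, MonoidHom.bijective_comp_of_ker_le _ hπ ?_⟩
  rintro ψ ⟨w⟩ hw
  refine hs (ψ.comp (QuotientGroup.mk' _)) (fun v hv => ?_) w hw
  rw [MonoidHom.comp_apply, QuotientGroup.mk'_apply,
    (QuotientGroup.eq_one_iff v).mpr (Subgroup.subset_normalClosure hv), map_one]

/-- For every finitely generated group `Γ` and every `n > 0` there is a finitely
presented group `Q` (a quotient of a free group of finite rank by the normal closure of
finitely many relators) and a surjection `π : Q → Γ` such that precomposition with `π`
is a bijection `Hom(Γ, GL_n(ℂ)) → Hom(Q, GL_n(ℂ))`. -/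
theorem stmt8 (Γ : Type) [Group Γ] [Group.FG Γ] (n : ℕ) (hn : 0 < n) :
    ∃ (m : ℕ) (R : Finset (FreeGroup (Fin m)))
      (π : (FreeGroup (Fin m) ⧸
        Subgroup.normalClosure (R : Set (FreeGroup (Fin m)))) →* Γ),
      Function.Surjective π ∧
      Function.Bijective
        (fun ρ : Γ →* Matrix.GeneralLinearGroup (Fin n) ℂ => ρ.comp π) :=
  stmt8_general Γ n
end

section
/- Let Q be the group with presentation ⟨a, x, y | a⁻¹xa = y, a⁻¹ya = x⟩. Then the subgroup S generated by {a², x, y} has index 2 in Q and is isomorphic to ℤ × F₂, where F₂ is the free group of rank 2. In particular, Q is large: it has a finite index subgroup admitting a surjective homomorphism onto a non-abelian free group. -/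
/-!
Sending `a` to the generator `t` of `ℤ` and `x, y` to the free generators identifies `Q` with
`F(x, y) ⋊ ℤ`, where `t` acts by the swap `x ↔ y`. The swap is an involution, so `t²` acts
trivially and `F₂ ⋊ 2ℤ` is the direct product `F₂ × 2ℤ ≅ F₂ × ℤ`. It is the preimage of `2ℤ`
under the projection to `ℤ`, hence of index 2, and it is generated by `t², x, y`, the images of
`a², x, y`. Projecting onto `F₂` shows that `Q` is large.
-/

/-- Relators of `Q = ⟨a, x, y | a⁻¹xa = y, a⁻¹ya = x⟩`, with `a, x, y` the generators
indexed by `0, 1, 2`. -/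
def rels12 : Set (FreeGroup (Fin 3)) :=
  {(FreeGroup.of 0)⁻¹ * FreeGroup.of 1 * FreeGroup.of 0 * (FreeGroup.of 2)⁻¹,
   (FreeGroup.of 0)⁻¹ * FreeGroup.of 2 * FreeGroup.of 0 * (FreeGroup.of 1)⁻¹}

theorem MonoidHom.map_zpow_apply_eq_conj {N M : Type*} [Group N] [Group M] {f : N →* M}
    {α : MulAut N} {c : M} (h : ∀ n, f (α n) = c * f n * c⁻¹) (k : ℤ) (n : N) :
    f ((α ^ k) n) = c ^ k * f n * (c ^ k)⁻¹ := by
  induction k using Int.induction_on generalizing n with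
  | zero => simp
  | succ k ih => rw [zpow_add_one, MulAut.mul_apply, ih, h, zpow_add_one]; group
  | pred k ih =>
    have h_inv : f (α⁻¹ n) = c⁻¹ * f n * c := by
      have := h (α⁻¹ n)
      rw [MulAut.apply_inv_self] at this
      rw [this]; group
    rw [zpow_sub_one, MulAut.mul_apply, ih, h_inv, zpow_sub_one]; group

namespace SemidirectProduct

variable {N G : Type*} [Group N] [Group G]

def liftZPowers {M : Type*} [Group M] (α : MulAut N) (f : N →* M) (c : M)
    (h : ∀ n, f (α n) = c * f n * c⁻¹) :
    N ⋊[zpowersHom (MulAut N) α] Multiplicative ℤ →* M :=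
  lift f (zpowersHom M c) fun k => by
    ext n
    exact MonoidHom.map_zpow_apply_eq_conj h k.toAdd n

variable {φ : G →* MulAut N}

theorem commute_inl_inr_of_mem_ker {g : G} (hg : g ∈ φ.ker) (n : N) :
    Commute (inl n : N ⋊[φ] G) (inr g) := by
  have h := inl_aut (φ := φ) g n
  rw [hg, MulAut.one_apply, map_inv] at h
  exact (mul_inv_eq_iff_eq_mul.mp h.symm).symm

def inlMulInr (K : Subgroup G) (hK : K ≤ φ.ker) : N × K →* N ⋊[φ] G :=
  MonoidHom.noncommCoprod inl (inr.comp K.subtype)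
    fun n k => commute_inl_inr_of_mem_ker (hK k.2) n

theorem index_comap_rightHom (K : Subgroup G) :
    (K.comap (rightHom : N ⋊[φ] G →* G)).index = K.index :=
  Subgroup.index_comap_of_surjective K rightHom_surjective

theorem closure_image_inl_union_image_inr {s : Set N} (hs : Subgroup.closure s = ⊤)
    (t : Set G) :
    Subgroup.closure (inl '' s ∪ inr '' t : Set (N ⋊[φ] G)) =
      (Subgroup.closure t).comap rightHom := by
  apply le_antisymm
  · rw [Subgroup.closure_le]
    rintro _ (⟨n, -, rfl⟩ | ⟨g, hg, rfl⟩)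
    · simp
    · simpa using Subgroup.subset_closure hg
  · intro x hx
    rw [← inl_left_mul_inr_right x]
    refine mul_mem ?_ ?_
    · have h_left : inl x.left ∈ (Subgroup.closure s).map (inl : N →* N ⋊[φ] G) := by
        rw [hs]; exact ⟨x.left, trivial, rfl⟩
      rw [MonoidHom.map_closure] at h_left
      exact Subgroup.closure_mono Set.subset_union_left h_left
    · have h_right : inr x.right ∈ (Subgroup.closure t).map (inr : G →* N ⋊[φ] G) :=
        ⟨x.right, hx, rfl⟩
      rw [MonoidHom.map_closure] at h_right
      exact Subgroup.closure_mono Set.subset_union_right h_right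

variable {K : Subgroup G} (hK : K ≤ φ.ker)

@[simp]
theorem inlMulInr_apply (p : N × K) : inlMulInr K hK p = inl p.1 * inr (p.2 : G) := rfl

theorem inlMulInr_injective : Function.Injective (inlMulInr K hK) := by
  rintro ⟨n, k⟩ ⟨n', k'⟩ h
  have h_left := congrArg SemidirectProduct.left h
  have h_right := congrArg SemidirectProduct.right h
  simp at h_left h_right
  simp [h_left, h_right]

theorem range_inlMulInr : (inlMulInr K hK).range = K.comap rightHom := by
  ext x
  refine ⟨?_, fun hx => ⟨(x.left, ⟨x.right, hx⟩), inl_left_mul_inr_right x⟩⟩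
  rintro ⟨⟨n, k⟩, rfl⟩
  simp

noncomputable def comapRightHomEquivProd :
    K.comap (rightHom : N ⋊[φ] G →* G) ≃* N × K :=
  (MulEquiv.subgroupCongr (range_inlMulInr hK).symm).trans
    (MonoidHom.ofInjective (inlMulInr_injective hK)).symm

end SemidirectProduct

namespace SwapExtension

open PresentedGroup SemidirectProduct

abbrev Q := PresentedGroup rels12

def swap : MulAut (FreeGroup Bool) := FreeGroup.freeGroupCongr Equiv.boolNot

@[simp]
theorem swap_of (b : Bool) : swap (.of b) = .of !b := rfl

theorem swap_mul_self : swap * swap = 1 :=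
  MulEquiv.toMonoidHom_injective <| FreeGroup.ext_hom _ _ fun b => by simp

theorem swap_inv : swap⁻¹ = swap := inv_eq_of_mul_eq_one_right swap_mul_self

abbrev G := FreeGroup Bool ⋊[zpowersHom (MulAut (FreeGroup Bool)) swap] Multiplicative ℤ

theorem conj_of_one : (of 0 : Q) * of 1 * (of 0)⁻¹ = of 2 := by
  have h : (of 0 : Q)⁻¹ * of 2 * of 0 * (of 1)⁻¹ = 1 := one_of_mem (by simp [rels12])
  rw [mul_inv_eq_one] at h
  rw [← h]; group

theorem conj_of_two : (of 0 : Q) * of 2 * (of 0)⁻¹ = of 1 := by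
  have h : (of 0 : Q)⁻¹ * of 1 * of 0 * (of 2)⁻¹ = 1 := one_of_mem (by simp [rels12])
  rw [mul_inv_eq_one] at h
  rw [← h]; group

theorem inr_inv_mul_inl_mul_inr (b : Bool) :
    (inr (.ofAdd 1) : G)⁻¹ * inl (.of b) * inr (.ofAdd 1) = inl (.of !b) := by
  rw [← map_inv, ← inl_aut_inv]
  simp [swap_inv]

def gen : Fin 3 → G := ![inr (.ofAdd 1), inl (.of false), inl (.of true)]

def toG : Q →* G :=
  toGroup (f := gen) <| by
    rintro r (rfl | rfl) <;> simp [gen, inr_inv_mul_inl_mul_inr]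

def ofFree : FreeGroup Bool →* Q := FreeGroup.lift fun b => cond b (of 2) (of 1)

theorem ofFree_comp_swap :
    ofFree.comp swap.toMonoidHom = (MulAut.conj (of 0 : Q)).toMonoidHom.comp ofFree :=
  FreeGroup.ext_hom _ _ fun b => by cases b <;> simp [ofFree, conj_of_one, conj_of_two]

def ofG : G →* Q :=
  liftZPowers swap ofFree (of 0) fun w => DFunLike.congr_fun ofFree_comp_swap w

def equivG : Q ≃* G :=
  MonoidHom.toMulEquiv toG ofG
    (PresentedGroup.ext fun i => by fin_cases i <;> simp [toG, ofG, ofFree, gen, liftZPowers])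
    (hom_ext
      (FreeGroup.ext_hom _ _ fun b => by cases b <;> simp [toG, ofG, ofFree, gen, liftZPowers])
      (MonoidHom.ext_mint (by simp [toG, ofG, ofFree, gen, liftZPowers])))

theorem equivG_of (i : Fin 3) : equivG (of i) = gen i := by simp [equivG, toG]

theorem equivG_of_zero_sq : equivG (of 0 ^ 2) = inr (.ofAdd 2) := by
  rw [map_pow, ← map_pow]
  rfl

theorem zpowers_two_le_ker :
    Subgroup.zpowers (.ofAdd 2) ≤ (zpowersHom (MulAut (FreeGroup Bool)) swap).ker := by
  rw [Subgroup.zpowers_le, MonoidHom.mem_ker, zpowersHom_apply, toAdd_ofAdd, zpow_two,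
    swap_mul_self]

-- `zpowers (ofAdd 2)` is definitionally `zmultiples 2` read in `Multiplicative ℤ`.
theorem index_zpowers_two : (Subgroup.zpowers (Multiplicative.ofAdd (2 : ℤ))).index = 2 :=
  Int.index_zmultiples 2

theorem zpowersHom_two_injective :
    Function.Injective (zpowersHom (Multiplicative ℤ) (.ofAdd 2)) := by
  intro m n h
  simpa using congrArg Multiplicative.toAdd h

noncomputable def zpowersTwoEquiv :
    Subgroup.zpowers (Multiplicative.ofAdd (2 : ℤ)) ≃* Multiplicative ℤ :=
  (MonoidHom.ofInjective zpowersHom_two_injective).symm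

def S : Subgroup Q := Subgroup.closure {of 0 ^ 2, of 1, of 2}

theorem map_S : S.map (equivG : Q →* G) = (Subgroup.zpowers (.ofAdd 2)).comap rightHom := by
  rw [S, MonoidHom.map_closure, Subgroup.zpowers_eq_closure,
    ← closure_image_inl_union_image_inr (s := {.of false, .of true})]
  · congr 1
    simp [Set.image_insert_eq, equivG_of_zero_sq, equivG_of, gen]
  · rw [← FreeGroup.closure_range_of]
    congr 1
    ext w
    simp

theorem index_S : S.index = 2 := by
  rw [← Subgroup.index_map_equiv S equivG, map_S, index_comap_rightHom, index_zpowers_two]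

noncomputable def equivS : S ≃* Multiplicative ℤ × FreeGroup Bool :=
  (equivG.subgroupMap S).trans <| (MulEquiv.subgroupCongr map_S).trans <|
    (comapRightHomEquivProd zpowers_two_le_ker).trans <|
      (MulEquiv.prodCongr (MulEquiv.refl _) zpowersTwoEquiv).trans MulEquiv.prodComm

end SwapExtension

/-- In `Q = ⟨a, x, y | a⁻¹xa = y, a⁻¹ya = x⟩`, the subgroup `S = ⟨a², x, y⟩` has index 2
and is isomorphic to `ℤ × F₂`; in particular `Q` is large: it has a finite index
subgroup surjecting onto a non-abelian free group (here the free group of rank 2). -/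
theorem stmt12 :
    (Subgroup.closure ({(PresentedGroup.of 0 : PresentedGroup rels12) ^ 2,
        PresentedGroup.of 1, PresentedGroup.of 2} :
        Set (PresentedGroup rels12))).index = 2 ∧
    Nonempty (↥(Subgroup.closure ({(PresentedGroup.of 0 : PresentedGroup rels12) ^ 2,
        PresentedGroup.of 1, PresentedGroup.of 2} :
        Set (PresentedGroup rels12))) ≃* Multiplicative ℤ × FreeGroup Bool) ∧
    ∃ T : Subgroup (PresentedGroup rels12), T.index ≠ 0 ∧
      ∃ f : ↥T →* FreeGroup Bool, Function.Surjective f :=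
  ⟨SwapExtension.index_S, ⟨SwapExtension.equivS⟩, SwapExtension.S,
    by rw [SwapExtension.index_S]; norm_num,
    (MonoidHom.snd _ _).comp SwapExtension.equivS.toMonoidHom,
    Prod.snd_surjective.comp SwapExtension.equivS.surjective⟩
end
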